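/- Let q be a self-join-free Boolean conjunctive query containing distinct atoms F, G with F attacks G, G attacks F, and the attack F → G strong (i.e., FD(q) ⊭ key(F) → key(G)). Define F* = {x : FD(q) ⊨ key(F) → x} and for constants a, b, c define a valuation τ_{a,b,c}: τ(u) = ⊥ if u ∈ F⁺ ∩ G⁺; τ(u) = a if u ∈ F⁺ \ G⁺; τ(u) = (b,c) if u ∈ G⁺ \ F*; τ(u) = b if u ∈ (G⁺ ∩ F*) \ F⁺; τ(u) = (a,b) if u ∈ F* \ (F⁺ ∪ G⁺); τ(u) = (a,b,c) if u ∉ F* ∪ G⁺. Then: (1) τ_{a,b,c}(F) and τ_{a',b',c'}(F) are key-equal iff a = a'; (2) τ_{a,b,c}(F) = τ_{a',b',c'}(F) iff a = a' and b = b'; (3) τ_{a,b,c}(G) and τ_{a',b',c'}(G) are key-equal iff b = b' and c = c'; (4) τ_{a,b,c}(G) = τ_{a',b',c'}(G) iff a = a', b = b', and c = c'. -/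

import Mathlib

/-- Constants: base constants, a special constant `⊥`, and injective pairing/tripling. -/
inductive C where
  | base : ℕ → C
  | bot : C
  | pair : C → C → C
  | triple : C → C → C → C
deriving DecidableEq

/-- A fact: relation name, primary-key values, non-key values. -/
structure DBFact where
  rel : ℕ
  key : List C
  rest : List C
deriving DecidableEq

/-- Two facts are key-equal if they have the same relation name and primary-key value. -/
def keyEq (A B : DBFact) : Prop := A.rel = B.rel ∧ A.key = B.key

/-- A term is a variable (inl) or a constant (inr). -/
abbrev Term := ℕ ⊕ C

/-- An atom with key positions and non-key positions. -/
structure Atom where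
  rel : ℕ
  key : List Term
  rest : List Term
deriving DecidableEq

def termVars (l : List Term) : Finset ℕ := (l.filterMap fun t => t.getLeft?).toFinset

/-- Variables at primary-key positions of an atom. -/
def keyVars (F : Atom) : Finset ℕ := termVars F.key

/-- All variables of an atom. -/
def atomVars (F : Atom) : Finset ℕ := termVars F.key ∪ termVars F.rest

/-- A query is self-join-free: no relation name occurs twice. -/
def SJF (q : Finset Atom) : Prop := ∀ F ∈ q, ∀ G ∈ q, F.rel = G.rel → F = G

/-- Apply a valuation to an atom, yielding a fact. -/
def applyVal (θ : ℕ → C) (F : Atom) : DBFact :=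
  ⟨F.rel, F.key.map (Sum.elim θ id), F.rest.map (Sum.elim θ id)⟩

/-- Semantic implication of a functional dependency `X → Y` by a set of FDs
(two-tuple semantics). -/
def FDImplies (fds : Set (Set ℕ × Set ℕ)) (X Y : Set ℕ) : Prop :=
  ∀ θ μ : ℕ → C,
    (∀ p ∈ fds, (∀ v ∈ p.1, θ v = μ v) → ∀ v ∈ p.2, θ v = μ v) →
    (∀ v ∈ X, θ v = μ v) → ∀ v ∈ Y, θ v = μ v

/-- `FD(q) = { key(F) → vars(F) : F ∈ q }`. -/
def FDs (q : Finset Atom) : Set (Set ℕ × Set ℕ) :=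
  {p | ∃ F ∈ q, p = ((keyVars F : Set ℕ), (atomVars F : Set ℕ))}

/-- `F⁺ = { x : FD(q \ {F}) ⊨ key(F) → x }`. -/
def plus (q : Finset Atom) (F : Atom) : Set ℕ :=
  {x | FDImplies (FDs (q.erase F)) (keyVars F : Set ℕ) {x}}

/-- One step of a witness for an attack by `F`. -/
def AttackStep (q : Finset Atom) (F : Atom) (A B : Atom) : Prop :=
  ¬ ((atomVars A ∩ atomVars B : Finset ℕ) : Set ℕ) ⊆ plus q F

/-- `F` attacks `G` in the attack graph of `q`. -/
def Attacks (q : Finset Atom) (F G : Atom) : Prop :=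
  F ≠ G ∧ F ∈ q ∧ ∃ L : List Atom, (∀ A ∈ L, A ∈ q) ∧
    List.Chain (AttackStep q F) F L ∧ (F :: L).getLast (List.cons_ne_nil F L) = G

/-- `F* = { x : FD(q) ⊨ key(F) → x }`. -/
def star (q : Finset Atom) (F : Atom) : Set ℕ :=
  {x | FDImplies (FDs q) (keyVars F : Set ℕ) {x}}

open Classical in
/-- The valuation `τ_{a,b,c}`: `⊥` on `F⁺ ∩ G⁺`, `a` on `F⁺ \ G⁺`, `(b,c)` on
`G⁺ \ F*`, `b` on `(G⁺ ∩ F*) \ F⁺`, `(a,b)` on `F* \ (F⁺ ∪ G⁺)`, and `(a,b,c)`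
outside `F* ∪ G⁺`. -/
noncomputable def tval (q : Finset Atom) (F G : Atom) (a b c : ℕ) (u : ℕ) : C :=
  if u ∈ plus q F ∩ plus q G then C.bot
  else if u ∈ plus q F then C.base a
  else if u ∈ plus q G ∧ u ∉ star q F then C.pair (C.base b) (C.base c)
  else if u ∈ plus q G then C.base b
  else if u ∈ star q F then C.pair (C.base a) (C.base b)
  else C.triple (C.base a) (C.base b) (C.base c)

/-!
On `F⁺` the valuation `τ_{a,b,c}` only depends on `a`, on `F*` only on `a, b`, and on `G⁺` only
on `b, c`; this gives every "if" direction, since `key(F) ⊆ F⁺`, `vars(F) ⊆ F*` and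
`key(G) ⊆ G⁺`. Conversely each parameter is read off at a single witness variable: `a` at a key
variable of `F` outside `G⁺` (as `G` attacks `F`), `b` at a variable of `F` outside `F⁺` (as `F`
attacks `G`), `(b, c)` at a key variable of `G` outside `F*` (as the attack is strong), and `a`
at a variable of `G` outside `G⁺` (as `G` attacks `F`).
-/

theorem mem_termVars {l : List Term} {u : ℕ} : u ∈ termVars l ↔ Sum.inl u ∈ l := by
  simp [termVars, Sum.getLeft?_eq_some_iff]

theorem map_elim_id_eq_iff {θ μ : ℕ → C} {l : List Term} :
    l.map (Sum.elim θ id) = l.map (Sum.elim μ id) ↔ Set.EqOn θ μ (termVars l) := by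
  rw [List.map_inj_left]
  constructor
  · intro h u hu
    simpa using h _ (mem_termVars.mp hu)
  · rintro h (u | k) ht
    · simpa using h (mem_termVars.mpr ht)
    · rfl

theorem keyVars_subset_atomVars {A : Atom} : (keyVars A : Set ℕ) ⊆ atomVars A := by
  simp [keyVars, atomVars]

theorem keyEq_applyVal_iff {θ μ : ℕ → C} {A : Atom} :
    keyEq (applyVal θ A) (applyVal μ A) ↔ Set.EqOn θ μ (keyVars A) := by
  simp only [keyEq, applyVal, keyVars, map_elim_id_eq_iff, true_and]

theorem applyVal_eq_applyVal_iff {θ μ : ℕ → C} {A : Atom} :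
    applyVal θ A = applyVal μ A ↔ Set.EqOn θ μ (atomVars A) := by
  simp only [applyVal, DBFact.mk.injEq, atomVars, Finset.coe_union, Set.eqOn_union,
    map_elim_id_eq_iff, true_and]

namespace FDImplies

variable {fds fds' : Set (Set ℕ × Set ℕ)} {X Y : Set ℕ}

theorem of_subset (h : Y ⊆ X) : FDImplies fds X Y :=
  fun _ _ _ hX _ hv => hX _ (h hv)

theorem mono (h : fds ⊆ fds') (hXY : FDImplies fds X Y) : FDImplies fds' X Y :=
  fun θ μ hfds => hXY θ μ fun p hp => hfds p (h hp)

theorem of_subset_setOf (h : Y ⊆ {y | FDImplies fds X {y}}) : FDImplies fds X Y :=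
  fun θ μ hfds hX y hy => h hy θ μ hfds hX y rfl

theorem snd_subset_setOf {p : Set ℕ × Set ℕ} (hp : p ∈ fds)
    (h : p.1 ⊆ {y | FDImplies fds X {y}}) : p.2 ⊆ {y | FDImplies fds X {y}} := by
  rintro y hy θ μ hfds hX v rfl
  exact hfds p hp (of_subset_setOf h θ μ hfds hX) v hy

end FDImplies

theorem FDs_mono {q₁ q₂ : Finset Atom} (h : q₁ ⊆ q₂) : FDs q₁ ⊆ FDs q₂ := by
  rintro p ⟨A, hA, rfl⟩
  exact ⟨A, h hA, rfl⟩

section Closures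

variable {q : Finset Atom} {F G : Atom}

theorem keyVars_subset_plus : (keyVars F : Set ℕ) ⊆ plus q F :=
  fun _ hu => FDImplies.of_subset (Set.singleton_subset_iff.mpr hu)

theorem keyVars_subset_star : (keyVars F : Set ℕ) ⊆ star q F :=
  fun _ hu => FDImplies.of_subset (Set.singleton_subset_iff.mpr hu)

theorem plus_subset_star : plus q F ⊆ star q F :=
  fun _ hu => hu.mono (FDs_mono (Finset.erase_subset F q))

theorem atomVars_subset_star (hF : F ∈ q) : (atomVars F : Set ℕ) ⊆ star q F :=
  FDImplies.snd_subset_setOf (p := (_, _)) ⟨F, hF, rfl⟩ keyVars_subset_star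

theorem atomVars_subset_plus {A : Atom} (hA : A ∈ q.erase G)
    (h : (keyVars A : Set ℕ) ⊆ plus q G) : (atomVars A : Set ℕ) ⊆ plus q G :=
  FDImplies.snd_subset_setOf (p := (_, _)) ⟨A, hA, rfl⟩ h

end Closures

namespace Attacks

variable {q : Finset Atom} {F G : Atom}

theorem exists_mem_atomVars_not_mem_plus (h : Attacks q F G) :
    ∃ u ∈ atomVars F, u ∉ plus q F := by
  obtain ⟨hne, -, L, -, hchain, hlast⟩ := h
  rcases L with _ | ⟨A, L⟩
  · exact absurd hlast hne
  · obtain ⟨u, hu, hnu⟩ := Set.not_subset.mp hchain.rel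
    exact ⟨u, (Finset.mem_inter.mp hu).1, hnu⟩

theorem exists_mem_atomVars_target_not_mem_plus (h : Attacks q F G) :
    ∃ u ∈ atomVars G, u ∉ plus q F := by
  obtain ⟨hne, -, L, -, hchain, hlast⟩ := h
  rcases L with _ | ⟨A, L⟩
  · exact absurd hlast hne
  · have hstep := List.IsChain.rel_getLast_dropLast hchain (by simp)
    rw [hlast] at hstep
    obtain ⟨u, hu, hnu⟩ := Set.not_subset.mp hstep
    exact ⟨u, (Finset.mem_inter.mp hu).2, hnu⟩

theorem exists_mem_keyVars_target_not_mem_plus (h : Attacks q F G) (hG : G ∈ q) :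
    ∃ u ∈ keyVars G, u ∉ plus q F := by
  by_contra! hkey
  obtain ⟨u, hu, hnu⟩ := h.exists_mem_atomVars_target_not_mem_plus
  exact hnu (atomVars_subset_plus (Finset.mem_erase.mpr ⟨h.1.symm, hG⟩) hkey hu)

end Attacks

section Valuation

variable {q : Finset Atom} {F G : Atom} {a b c a' b' c' u : ℕ}

theorem tval_eq_of_mem_plus_left (hu : u ∈ plus q F) :
    tval q F G a b c u = tval q F G a b' c' u := by
  simp [tval, hu]

theorem tval_eq_of_mem_plus_right (hu : u ∈ plus q G) :
    tval q F G a b c u = tval q F G a' b c u := by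
  by_cases hF : u ∈ plus q F <;> simp [tval, hu, hF]

theorem tval_eq_of_mem_star (hu : u ∈ star q F) :
    tval q F G a b c u = tval q F G a b c' u := by
  simp [tval, hu]

theorem eq_of_tval_eq_of_mem_plus_left (hF : u ∈ plus q F) (hG : u ∉ plus q G)
    (h : tval q F G a b c u = tval q F G a' b' c' u) : a = a' := by
  simpa [tval, hF, hG] using h

theorem eq_of_tval_eq_of_mem_star (hF : u ∉ plus q F) (hs : u ∈ star q F)
    (h : tval q F G a b c u = tval q F G a' b' c' u) : b = b' := by
  by_cases hG : u ∈ plus q G <;> simp_all [tval]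

theorem eq_of_tval_eq_of_not_mem_star (hs : u ∉ star q F) (hG : u ∈ plus q G)
    (h : tval q F G a b c u = tval q F G a' b' c' u) : b = b' ∧ c = c' := by
  have hF : u ∉ plus q F := fun hF => hs (plus_subset_star hF)
  simpa [tval, hF, hG, hs] using h

theorem eq_of_tval_eq_of_not_mem_plus_right (hG : u ∉ plus q G)
    (h : tval q F G a b c u = tval q F G a' b' c' u) : a = a' := by
  by_cases hF : u ∈ plus q F <;> by_cases hs : u ∈ star q F <;> simp_all [tval]

end Valuation

theorem tval_key_equalities_general (q : Finset Atom) (F G : Atom)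
    (h1 : Attacks q F G) (h2 : Attacks q G F)
    (hstrong : ¬ FDImplies (FDs q) (keyVars F : Set ℕ) (keyVars G : Set ℕ)) :
    ∀ a b c a' b' c' : ℕ,
      (keyEq (applyVal (tval q F G a b c) F) (applyVal (tval q F G a' b' c') F) ↔
        a = a') ∧
      (applyVal (tval q F G a b c) F = applyVal (tval q F G a' b' c') F ↔
        a = a' ∧ b = b') ∧
      (keyEq (applyVal (tval q F G a b c) G) (applyVal (tval q F G a' b' c') G) ↔
        b = b' ∧ c = c') ∧
      (applyVal (tval q F G a b c) G = applyVal (tval q F G a' b' c') G ↔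
        a = a' ∧ b = b' ∧ c = c') := by
  have hF : F ∈ q := h1.2.1
  obtain ⟨w₁, hw₁key, hw₁G⟩ := h2.exists_mem_keyVars_target_not_mem_plus hF
  obtain ⟨w₂, hw₂vars, hw₂F⟩ := h1.exists_mem_atomVars_not_mem_plus
  obtain ⟨w₃, hw₃key, hw₃star⟩ := Set.not_subset.mp (hstrong ∘ FDImplies.of_subset_setOf)
  obtain ⟨w₄, hw₄vars, hw₄G⟩ := h2.exists_mem_atomVars_not_mem_plus
  intro a b c a' b' c'
  simp only [keyEq_applyVal_iff, applyVal_eq_applyVal_iff]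
  have keyF : Set.EqOn (tval q F G a b c) (tval q F G a' b' c') (keyVars F) ↔ a = a' :=
    ⟨fun h => eq_of_tval_eq_of_mem_plus_left (keyVars_subset_plus hw₁key) hw₁G (h hw₁key),
      by rintro rfl; exact fun u hu => tval_eq_of_mem_plus_left (keyVars_subset_plus hu)⟩
  have keyG : Set.EqOn (tval q F G a b c) (tval q F G a' b' c') (keyVars G) ↔ b = b' ∧ c = c' :=
    ⟨fun h => eq_of_tval_eq_of_not_mem_star hw₃star (keyVars_subset_plus hw₃key) (h hw₃key),
      by rintro ⟨rfl, rfl⟩; exact fun u hu => tval_eq_of_mem_plus_right (keyVars_subset_plus hu)⟩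
  refine ⟨keyF, ⟨fun h => ⟨?_, ?_⟩, ?_⟩, keyG, ⟨fun h => ⟨?_, keyG.mp ?_⟩, ?_⟩⟩
  · exact keyF.mp (h.mono keyVars_subset_atomVars)
  · exact eq_of_tval_eq_of_mem_star hw₂F (atomVars_subset_star hF hw₂vars) (h hw₂vars)
  · rintro ⟨rfl, rfl⟩
    exact fun u hu => tval_eq_of_mem_star (atomVars_subset_star hF hu)
  · exact eq_of_tval_eq_of_not_mem_plus_right hw₄G (h hw₄vars)
  · exact h.mono keyVars_subset_atomVars
  · rintro ⟨rfl, rfl, rfl⟩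
    exact Set.eqOn_refl _ _

/-- Key-equality and equality of the `τ`-images of `F` and `G`, when `F` and `G`
attack each other and the attack `F → G` is strong. -/
theorem tval_key_equalities (q : Finset Atom) (hq : SJF q) (F G : Atom)
    (hFG : F ≠ G) (h1 : Attacks q F G) (h2 : Attacks q G F)
    (hstrong : ¬ FDImplies (FDs q) (keyVars F : Set ℕ) (keyVars G : Set ℕ)) :
    ∀ a b c a' b' c' : ℕ,
      (keyEq (applyVal (tval q F G a b c) F) (applyVal (tval q F G a' b' c') F) ↔
        a = a') ∧
      (applyVal (tval q F G a b c) F = applyVal (tval q F G a' b' c') F ↔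
        a = a' ∧ b = b') ∧
      (keyEq (applyVal (tval q F G a b c) G) (applyVal (tval q F G a' b' c') G) ↔
        b = b' ∧ c = c') ∧
      (applyVal (tval q F G a b c) G = applyVal (tval q F G a' b' c') G ↔
        a = a' ∧ b = b' ∧ c = c') :=
  tval_key_equalities_general q F G h1 h2 hstrong
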